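/- Let j ≥ 0 and m, n be integers with |m| ≤ j and |n| ≤ j, and let (φ, θ, ψ) satisfy θ ∈ (0, π). With the Wigner function D^j_{mn}(φ, θ, ψ) = e^{i(mφ + nψ)}·d^j_{mn}(θ), where d^j_{mn}(θ) = (−1)^{m−n}·√((j+m)!·(j−m)!/((j+n)!·(j−n)!))·(sin(θ/2))^{m−n}·(cos(θ/2))^{m+n}·P^{(m−n, m+n)}_{j−m}(cos θ) and P^{(α,β)}_k(z) = ((−1)^k/(2^k·k!))·(1−z)^{−α}·(1+z)^{−β}·(d^k/dz^k)[(1−z)^{k+α}·(1+z)^{k+β}], and with the left-invariant fields ξ₁ = (sin ψ/sin θ)∂_φ + cos ψ ∂_θ − cot θ sin ψ ∂_ψ, ξ₂ = (cos ψ/sin θ)∂_φ − sin ψ ∂_θ − cot θ cos ψ ∂_ψ, ξ₃ = ∂_ψ, the function D^j_{mn} is an eigenfunction of the Casimir operator: ξ₁(ξ₁ D^j_{mn}) + ξ₂(ξ₂ D^j_{mn}) + ξ₃(ξ₃ D^j_{mn}) = −j·(j+1)·D^j_{mn} at every such point. -/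

import Mathlib

/-- Directional (partial) derivative of `f : ℝ³ → ℂ` along the constant vector `v`. -/
noncomputable def pd (v : ℝ × ℝ × ℝ) (f : ℝ × ℝ × ℝ → ℂ) : ℝ × ℝ × ℝ → ℂ :=
  fun p => fderiv ℝ f p v

/-- `∂_φ`, the partial derivative in the first Euler angle `φ`. -/
noncomputable def dphi : (ℝ × ℝ × ℝ → ℂ) → ℝ × ℝ × ℝ → ℂ := pd (1, 0, 0)

/-- `∂_θ`, the partial derivative in the second Euler angle `θ`. -/
noncomputable def dtheta : (ℝ × ℝ × ℝ → ℂ) → ℝ × ℝ × ℝ → ℂ := pd (0, 1, 0)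

/-- `∂_ψ`, the partial derivative in the third Euler angle `ψ`. -/
noncomputable def dpsi : (ℝ × ℝ × ℝ → ℂ) → ℝ × ℝ × ℝ → ℂ := pd (0, 0, 1)

/-- Left-invariant field `ξ₁ = (sin ψ/sin θ)∂_φ + cos ψ ∂_θ − cot θ sin ψ ∂_ψ`
on `SO(3)` in Euler angles `p = (φ, θ, ψ)`. -/
noncomputable def xi1 (f : ℝ × ℝ × ℝ → ℂ) : ℝ × ℝ × ℝ → ℂ := fun p =>
  ((Real.sin p.2.2 / Real.sin p.2.1 : ℝ) : ℂ) * dphi f p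
    + ((Real.cos p.2.2 : ℝ) : ℂ) * dtheta f p
    - ((Real.cos p.2.1 / Real.sin p.2.1 * Real.sin p.2.2 : ℝ) : ℂ) * dpsi f p

/-- Left-invariant field `ξ₂ = (cos ψ/sin θ)∂_φ − sin ψ ∂_θ − cot θ cos ψ ∂_ψ`. -/
noncomputable def xi2 (f : ℝ × ℝ × ℝ → ℂ) : ℝ × ℝ × ℝ → ℂ := fun p =>
  ((Real.cos p.2.2 / Real.sin p.2.1 : ℝ) : ℂ) * dphi f p
    - ((Real.sin p.2.2 : ℝ) : ℂ) * dtheta f p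
    - ((Real.cos p.2.1 / Real.sin p.2.1 * Real.cos p.2.2 : ℝ) : ℂ) * dpsi f p

/-- Left-invariant field `ξ₃ = ∂_ψ`. -/
noncomputable def xi3 (f : ℝ × ℝ × ℝ → ℂ) : ℝ × ℝ × ℝ → ℂ := fun p => dpsi f p

/-- Right-invariant field `η₁ = cot θ sin φ ∂_φ − cos φ ∂_θ − (sin φ/sin θ)∂_ψ`. -/
noncomputable def eta1 (f : ℝ × ℝ × ℝ → ℂ) : ℝ × ℝ × ℝ → ℂ := fun p =>
  ((Real.cos p.2.1 / Real.sin p.2.1 * Real.sin p.1 : ℝ) : ℂ) * dphi f p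
    - ((Real.cos p.1 : ℝ) : ℂ) * dtheta f p
    - ((Real.sin p.1 / Real.sin p.2.1 : ℝ) : ℂ) * dpsi f p

/-- Right-invariant field `η₂ = −cot θ cos φ ∂_φ − sin φ ∂_θ + (cos φ/sin θ)∂_ψ`. -/
noncomputable def eta2 (f : ℝ × ℝ × ℝ → ℂ) : ℝ × ℝ × ℝ → ℂ := fun p =>
  -((Real.cos p.2.1 / Real.sin p.2.1 * Real.cos p.1 : ℝ) : ℂ) * dphi f p
    - ((Real.sin p.1 : ℝ) : ℂ) * dtheta f p
    + ((Real.cos p.1 / Real.sin p.2.1 : ℝ) : ℂ) * dpsi f p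

/-- Right-invariant field `η₃ = −∂_φ`. -/
noncomputable def eta3 (f : ℝ × ℝ × ℝ → ℂ) : ℝ × ℝ × ℝ → ℂ := fun p => -dphi f p

/-- The Jacobi polynomial via the Rodrigues formula
`P^{(α,β)}_k(z) = ((−1)^k/(2^k·k!))·(1−z)^{−α}·(1+z)^{−β}·(d/dz)^k[(1−z)^{k+α}·(1+z)^{k+β}]`. -/
noncomputable def jacobiP (α β : ℤ) (k : ℕ) (z : ℝ) : ℝ :=
  ((-1 : ℝ)^k / (2^k * (Nat.factorial k : ℝ))) * (1 - z)^(-α) * (1 + z)^(-β) *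
    iteratedDeriv k (fun t : ℝ => (1 - t)^((k : ℤ) + α) * (1 + t)^((k : ℤ) + β)) z

/-- The small Wigner function
`d^j_{mn}(θ) = (−1)^{m−n}·√((j+m)!(j−m)!/((j+n)!(j−n)!))·sin^{m−n}(θ/2)·cos^{m+n}(θ/2)
· P^{(m−n,m+n)}_{j−m}(cos θ)`. -/
noncomputable def wignerd (j : ℕ) (m n : ℤ) (θ : ℝ) : ℝ :=
  (-1 : ℝ)^(m - n) *
    Real.sqrt ((Nat.factorial ((j : ℤ) + m).toNat * Nat.factorial ((j : ℤ) - m).toNat : ℝ) /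
      (Nat.factorial ((j : ℤ) + n).toNat * Nat.factorial ((j : ℤ) - n).toNat : ℝ)) *
    (Real.sin (θ / 2))^(m - n) * (Real.cos (θ / 2))^(m + n) *
    jacobiP (m - n) (m + n) ((j : ℤ) - m).toNat (Real.cos θ)

/-- The Wigner D-function `D^j_{mn}(φ,θ,ψ) = e^{i(mφ+nψ)}·d^j_{mn}(θ)`. -/
noncomputable def wignerD (j : ℕ) (m n : ℤ) (φ θ ψ : ℝ) : ℂ :=
  Complex.exp (Complex.I * ((m * φ + n * ψ : ℝ) : ℂ)) * (wignerd j m n θ : ℂ)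

/-- The Wigner D-function, as a function of the Euler angles `p = (φ, θ, ψ)`. -/
noncomputable def wignerDfun (j : ℕ) (m n : ℤ) : ℝ × ℝ × ℝ → ℂ :=
  fun p => wignerD j m n p.1 p.2.1 p.2.2


/-! The Casimir `ξ₁² + ξ₂² + ξ₃²` is the Laplacian of `SO(3)` in Euler angles,
`∂_θ² + cot θ ∂_θ + (∂_φ² + ∂_ψ² - 2 cos θ ∂_φ∂_ψ) / sin² θ`, so on a function
`e^{i(mφ+nψ)} g(θ)` it acts as the Wigner operator
`g ↦ g'' + cot θ g' - (m² - 2mn cos θ + n²) / sin² θ · g`.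
On `(0, π)` the Rodrigues formula turns `d^j_{mn}` into a multiple of
`sin^{n-m}(θ/2) cos^{-(m+n)}(θ/2) u(cos θ)` with `u = D^{j-m}[(1-z)^{j-n}(1+z)^{j+n}]`.
Differentiating `(1 - z²) w' = (2n - 2jz) w`, for `w = (1-z)^{j-n}(1+z)^{j+n}`, `j - m + 1` times
gives the Jacobi equation for `u`, and substituting `z = cos θ` turns it into the Wigner equation
with eigenvalue `-j(j+1)`. -/

open Filter Topology Polynomial

section EulerAngles
variable {f : ℝ × ℝ × ℝ → ℂ} {p : ℝ × ℝ × ℝ}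

theorem hasDerivAt_phi_section (hf : DifferentiableAt ℝ f p) :
    HasDerivAt (fun t => f (t, p.2.1, p.2.2)) (dphi f p) p.1 :=
  hf.hasFDerivAt.comp_hasDerivAt_of_eq p.1
    ((hasDerivAt_id p.1).prodMk ((hasDerivAt_const _ _).prodMk (hasDerivAt_const _ _))) rfl

theorem hasDerivAt_theta_section (hf : DifferentiableAt ℝ f p) :
    HasDerivAt (fun t => f (p.1, t, p.2.2)) (dtheta f p) p.2.1 :=
  hf.hasFDerivAt.comp_hasDerivAt_of_eq p.2.1
    ((hasDerivAt_const _ _).prodMk ((hasDerivAt_id _).prodMk (hasDerivAt_const _ _))) rfl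

theorem hasDerivAt_psi_section (hf : DifferentiableAt ℝ f p) :
    HasDerivAt (fun t => f (p.1, p.2.1, t)) (dpsi f p) p.2.2 :=
  hf.hasFDerivAt.comp_hasDerivAt_of_eq p.2.2
    ((hasDerivAt_const _ _).prodMk ((hasDerivAt_const _ _).prodMk (hasDerivAt_id _))) rfl

theorem Filter.EventuallyEq.pd_eq {g : ℝ × ℝ × ℝ → ℂ} (h : f =ᶠ[𝓝 p] g) (v : ℝ × ℝ × ℝ) :
    pd v f p = pd v g p := by
  simp only [pd, h.fderiv_eq]

theorem differentiableAt_xi1 (hs : Real.sin p.2.1 ≠ 0) (h1 : DifferentiableAt ℝ (dphi f) p)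
    (h2 : DifferentiableAt ℝ (dtheta f) p) (h3 : DifferentiableAt ℝ (dpsi f) p) :
    DifferentiableAt ℝ (xi1 f) p := by
  unfold xi1; fun_prop (disch := exact hs)

theorem differentiableAt_xi2 (hs : Real.sin p.2.1 ≠ 0) (h1 : DifferentiableAt ℝ (dphi f) p)
    (h2 : DifferentiableAt ℝ (dtheta f) p) (h3 : DifferentiableAt ℝ (dpsi f) p) :
    DifferentiableAt ℝ (xi2 f) p := by
  unfold xi2; fun_prop (disch := exact hs)

theorem casimir_eq_eulerLaplacian (hs : Real.sin p.2.1 ≠ 0)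
    (h1 : DifferentiableAt ℝ (dphi f) p) (h2 : DifferentiableAt ℝ (dtheta f) p)
    (h3 : DifferentiableAt ℝ (dpsi f) p) :
    xi1 (xi1 f) p + xi2 (xi2 f) p + xi3 (xi3 f) p
      = dtheta (dtheta f) p + ((Real.cos p.2.1 / Real.sin p.2.1 : ℝ) : ℂ) * dtheta f p
        + (dphi (dphi f) p + dpsi (dpsi f) p
            - (Real.cos p.2.1 : ℂ) * (dphi (dpsi f) p + dpsi (dphi f) p))
          / (Real.sin p.2.1 : ℂ) ^ 2 := by
  have hsθ := Real.hasDerivAt_sin p.2.1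
  have hsψ := Real.hasDerivAt_sin p.2.2
  have hcψ := Real.hasDerivAt_cos p.2.2
  have e1φ := (hasDerivAt_phi_section (differentiableAt_xi1 hs h1 h2 h3)).unique
    ((((hasDerivAt_phi_section h1).const_mul ((Real.sin p.2.2 / Real.sin p.2.1 : ℝ) : ℂ)).add
      ((hasDerivAt_phi_section h2).const_mul ((Real.cos p.2.2 : ℝ) : ℂ))).sub
      ((hasDerivAt_phi_section h3).const_mul
        ((Real.cos p.2.1 / Real.sin p.2.1 * Real.sin p.2.2 : ℝ) : ℂ)))
  have e2φ := (hasDerivAt_phi_section (differentiableAt_xi2 hs h1 h2 h3)).unique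
    ((((hasDerivAt_phi_section h1).const_mul ((Real.cos p.2.2 / Real.sin p.2.1 : ℝ) : ℂ)).sub
      ((hasDerivAt_phi_section h2).const_mul ((Real.sin p.2.2 : ℝ) : ℂ))).sub
      ((hasDerivAt_phi_section h3).const_mul
        ((Real.cos p.2.1 / Real.sin p.2.1 * Real.cos p.2.2 : ℝ) : ℂ)))
  have e1θ := (hasDerivAt_theta_section (differentiableAt_xi1 hs h1 h2 h3)).unique
    (((((hasDerivAt_const _ (Real.sin p.2.2)).div hsθ hs).ofReal_comp.mul
        (hasDerivAt_theta_section h1)).add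
      ((hasDerivAt_theta_section h2).const_mul ((Real.cos p.2.2 : ℝ) : ℂ))).sub
      ((((Real.hasDerivAt_cos _).div hsθ hs).mul_const (Real.sin p.2.2)).ofReal_comp.mul
        (hasDerivAt_theta_section h3)))
  have e2θ := (hasDerivAt_theta_section (differentiableAt_xi2 hs h1 h2 h3)).unique
    (((((hasDerivAt_const _ (Real.cos p.2.2)).div hsθ hs).ofReal_comp.mul
        (hasDerivAt_theta_section h1)).sub
      ((hasDerivAt_theta_section h2).const_mul ((Real.sin p.2.2 : ℝ) : ℂ))).sub
      ((((Real.hasDerivAt_cos _).div hsθ hs).mul_const (Real.cos p.2.2)).ofReal_comp.mul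
        (hasDerivAt_theta_section h3)))
  have e1ψ := (hasDerivAt_psi_section (differentiableAt_xi1 hs h1 h2 h3)).unique
    ((((hsψ.div_const (Real.sin p.2.1)).ofReal_comp.mul (hasDerivAt_psi_section h1)).add
      (hcψ.ofReal_comp.mul (hasDerivAt_psi_section h2))).sub
      ((hsψ.const_mul (Real.cos p.2.1 / Real.sin p.2.1)).ofReal_comp.mul
        (hasDerivAt_psi_section h3)))
  have e2ψ := (hasDerivAt_psi_section (differentiableAt_xi2 hs h1 h2 h3)).unique
    ((((hcψ.div_const (Real.sin p.2.1)).ofReal_comp.mul (hasDerivAt_psi_section h1)).sub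
      (hsψ.ofReal_comp.mul (hasDerivAt_psi_section h2))).sub
      ((hcψ.const_mul (Real.cos p.2.1 / Real.sin p.2.1)).ofReal_comp.mul
        (hasDerivAt_psi_section h3)))
  simp only [Prod.mk.eta, Pi.div_apply] at e1θ e2θ e1ψ e2ψ
  rw [xi1, xi2, show xi3 (xi3 f) = dpsi (dpsi f) from rfl, e1φ, e2φ, e1θ, e2θ, e1ψ, e2ψ]
  have hθ := Complex.sin_sq_add_cos_sq (p.2.1 : ℂ)
  have hψ := Complex.sin_sq_add_cos_sq (p.2.2 : ℂ)
  have hsC : Complex.sin p.2.1 ≠ 0 := by exact_mod_cast hs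
  push_cast
  set S := Complex.sin p.2.1
  set C := Complex.cos p.2.1
  field_simp
  -- The mixed second-order and the first-order `∂_φ`, `∂_ψ` terms cancel exactly between
  -- `ξ₁²` and `ξ₂²`; the rest only needs `sin² + cos² = 1` in `ψ` and in `θ`.
  linear_combination (S ^ 2 * dtheta (dtheta f) p + dphi (dphi f) p + C ^ 2 * dpsi (dpsi f) p
      + S * C * dtheta f p - C * (dphi (dpsi f) p + dpsi (dphi f) p)) * hψ
    + dpsi (dpsi f) p * hθ

end EulerAngles

noncomputable def eulerMode (μ ν : ℝ) (g : ℝ → ℂ) : ℝ × ℝ × ℝ → ℂ := fun q =>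
  Complex.exp (Complex.I * ((μ * q.1 + ν * q.2.2 : ℝ) : ℂ)) * g q.2.1

section EulerMode
variable {μ ν : ℝ} {g : ℝ → ℂ} {q : ℝ × ℝ × ℝ}

theorem differentiableAt_eulerMode (hg : DifferentiableAt ℝ g q.2.1) :
    DifferentiableAt ℝ (eulerMode μ ν g) q := by
  unfold eulerMode; fun_prop

theorem dphi_eulerMode (hg : DifferentiableAt ℝ g q.2.1) :
    dphi (eulerMode μ ν g) q = Complex.I * μ * eulerMode μ ν g q := by
  have h := ((((hasDerivAt_id q.1).const_mul μ).add_const (ν * q.2.2)).ofReal_comp.const_mul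
    Complex.I).cexp.mul_const (g q.2.1)
  refine (hasDerivAt_phi_section (differentiableAt_eulerMode hg)).unique (h.congr_deriv ?_)
  simp [eulerMode]; ring

theorem dpsi_eulerMode (hg : DifferentiableAt ℝ g q.2.1) :
    dpsi (eulerMode μ ν g) q = Complex.I * ν * eulerMode μ ν g q := by
  have h := ((((hasDerivAt_id q.2.2).const_mul ν).const_add (μ * q.1)).ofReal_comp.const_mul
    Complex.I).cexp.mul_const (g q.2.1)
  refine (hasDerivAt_psi_section (differentiableAt_eulerMode hg)).unique (h.congr_deriv ?_)
  simp [eulerMode]; ring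

theorem dtheta_eulerMode {d : ℂ} (hg : HasDerivAt g d q.2.1) :
    dtheta (eulerMode μ ν g) q = Complex.exp (Complex.I * ((μ * q.1 + ν * q.2.2 : ℝ) : ℂ)) * d :=
  (hasDerivAt_theta_section (differentiableAt_eulerMode hg.differentiableAt)).unique
    (hg.const_mul (Complex.exp (Complex.I * ((μ * q.1 + ν * q.2.2 : ℝ) : ℂ))))

theorem casimir_eulerMode {g' : ℝ → ℂ} {g'' : ℂ} {p : ℝ × ℝ × ℝ}
    (hg : ∀ᶠ t in 𝓝 p.2.1, HasDerivAt g (g' t) t) (hg' : HasDerivAt g' g'' p.2.1)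
    (hs : Real.sin p.2.1 ≠ 0) :
    xi1 (xi1 (eulerMode μ ν g)) p + xi2 (xi2 (eulerMode μ ν g)) p
        + xi3 (xi3 (eulerMode μ ν g)) p
      = Complex.exp (Complex.I * ((μ * p.1 + ν * p.2.2 : ℝ) : ℂ))
        * (g'' + ((Real.cos p.2.1 / Real.sin p.2.1 : ℝ) : ℂ) * g' p.2.1
          - ((μ ^ 2 - 2 * μ * ν * Real.cos p.2.1 + ν ^ 2) / Real.sin p.2.1 ^ 2 : ℝ) * g p.2.1) := by
  have hq : ∀ᶠ q in 𝓝 p, HasDerivAt g (g' q.2.1) q.2.1 :=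
    (continuous_snd.fst.tendsto p).eventually hg
  have hgθ : DifferentiableAt ℝ g p.2.1 := hg.self_of_nhds.differentiableAt
  have hμg : DifferentiableAt ℝ (fun t => Complex.I * μ * g t) p.2.1 := hgθ.const_mul _
  have hνg : DifferentiableAt ℝ (fun t => Complex.I * ν * g t) p.2.1 := hgθ.const_mul _
  set F := eulerMode μ ν g
  set Fμ := eulerMode μ ν (fun t => Complex.I * μ * g t)
  set Fν := eulerMode μ ν (fun t => Complex.I * ν * g t)
  have hφ : dphi F =ᶠ[𝓝 p] Fμ := by
    filter_upwards [hq] with q hq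
    rw [dphi_eulerMode hq.differentiableAt]
    simp only [Fμ, eulerMode]; ring
  have hψ : dpsi F =ᶠ[𝓝 p] Fν := by
    filter_upwards [hq] with q hq
    rw [dpsi_eulerMode hq.differentiableAt]
    simp only [Fν, eulerMode]; ring
  have hθ : dtheta F =ᶠ[𝓝 p] eulerMode μ ν g' := by
    filter_upwards [hq] with q hq
    exact dtheta_eulerMode hq
  rw [casimir_eq_eulerLaplacian hs
      ((differentiableAt_eulerMode hμg).congr_of_eventuallyEq hφ)
      ((differentiableAt_eulerMode hg'.differentiableAt).congr_of_eventuallyEq hθ)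
      ((differentiableAt_eulerMode hνg).congr_of_eventuallyEq hψ),
    show dphi (dphi F) p = dphi Fμ p from hφ.pd_eq _,
    show dpsi (dphi F) p = dpsi Fμ p from hφ.pd_eq _,
    show dphi (dpsi F) p = dphi Fν p from hψ.pd_eq _,
    show dpsi (dpsi F) p = dpsi Fν p from hψ.pd_eq _,
    show dtheta (dtheta F) p = dtheta (eulerMode μ ν g') p from hθ.pd_eq _,
    dphi_eulerMode hμg, dpsi_eulerMode hμg, dphi_eulerMode hνg, dpsi_eulerMode hνg,
    dtheta_eulerMode hg', dtheta_eulerMode hg.self_of_nhds]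
  simp only [eulerMode]
  push_cast
  linear_combination (Complex.exp (Complex.I * (μ * p.1 + ν * p.2.2)) * g p.2.1
    * (μ ^ 2 + ν ^ 2 - 2 * μ * ν * Complex.cos p.2.1) / Complex.sin p.2.1 ^ 2) * Complex.I_sq

end EulerMode

section Rodrigues
variable {R : Type*} [CommRing R]

theorem one_sub_X_sq_mul_derivative_one_sub_X_pow_mul_one_add_X_pow (a b : ℕ) :
    (1 - X ^ 2) * derivative ((1 - X) ^ a * (1 + X) ^ b : R[X])
      = (C ((b : R) - a) - C ((a : R) + b) * X) * ((1 - X) ^ a * (1 + X) ^ b) := by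
  rcases a with _ | a <;> rcases b with _ | b <;>
    simp only [derivative_mul, derivative_pow, derivative_sub, derivative_add, derivative_one,
      derivative_X, Nat.cast_add, Nat.cast_one, Nat.cast_zero, Nat.add_sub_cancel] <;>
    simp only [map_add, map_sub, map_one, map_natCast, map_zero, pow_succ] <;> ring

theorem one_sub_X_sq_mul_iterate_derivative {w : R[X]} {β γ : R}
    (hw : (1 - X ^ 2) * derivative w = (C β - C γ * X) * w) (k : ℕ) :
    (1 - X ^ 2) * derivative^[k + 2] w
      = (C β + C (2 * ((k : R) + 1) - γ) * X) * derivative^[k + 1] w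
        - C (((k : R) + 1) * (γ - k)) * derivative^[k] w := by
  induction k with
  | zero =>
    have h := congrArg derivative hw
    simp only [derivative_mul, derivative_sub, derivative_one, derivative_X_pow, derivative_C,
      derivative_X] at h
    simp only [Function.iterate_succ_apply', Function.iterate_zero_apply, Nat.cast_zero]
    simp only [map_sub, map_add, map_mul, map_one, map_zero, Nat.cast_ofNat] at h ⊢
    linear_combination h
  | succ k ih =>
    have h := congrArg derivative ih
    simp only [derivative_mul, derivative_sub, derivative_add, derivative_one, derivative_X_pow,
      derivative_C, derivative_X] at h
    simp only [Function.iterate_succ_apply'] at h ⊢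
    simp only [map_sub, map_add, map_mul, map_natCast, map_one, map_ofNat, Nat.cast_add,
      Nat.cast_one] at h ⊢
    linear_combination h

end Rodrigues

theorem iteratedDeriv_polynomial_eval {𝕜 : Type*} [NontriviallyNormedField 𝕜] (p : 𝕜[X])
    (k : ℕ) : iteratedDeriv k (fun t => p.eval t) = fun t => (derivative^[k] p).eval t := by
  induction k generalizing p with
  | zero => simp
  | succ k ih =>
    rw [iteratedDeriv_succ', show (deriv fun t => p.eval t) = fun t => p.derivative.eval t from
      funext fun t => Polynomial.deriv p, ih, Function.iterate_succ_apply]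

theorem hasDerivAt_sin_half_zpow_mul_cos_half_zpow (A B : ℤ) {θ : ℝ}
    (hS : Real.sin (θ / 2) ≠ 0) (hK : Real.cos (θ / 2) ≠ 0) :
    HasDerivAt (fun t => Real.sin (t / 2) ^ A * Real.cos (t / 2) ^ B)
      (Real.sin (θ / 2) ^ A * Real.cos (θ / 2) ^ B
        * ((A * (1 + Real.cos θ) - B * (1 - Real.cos θ)) / (2 * Real.sin θ))) θ := by
  have hhalf : HasDerivAt (fun t : ℝ => t / 2) (1 / 2) θ := (hasDerivAt_id θ).div_const 2
  have hSA := (hasDerivAt_zpow A _ (Or.inl hS)).comp θ ((Real.hasDerivAt_sin _).comp θ hhalf)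
  have hKB := (hasDerivAt_zpow B _ (Or.inl hK)).comp θ ((Real.hasDerivAt_cos _).comp θ hhalf)
  refine (hSA.mul hKB).congr_deriv ?_
  have hsin : Real.sin θ = 2 * Real.sin (θ / 2) * Real.cos (θ / 2) := by
    rw [← Real.sin_two_mul]; ring_nf
  have hcos : Real.cos θ = Real.cos (θ / 2) ^ 2 - Real.sin (θ / 2) ^ 2 := by
    rw [← Real.cos_two_mul']; ring_nf
  simp only [Function.comp_def, zpow_sub_one₀ hS, zpow_sub_one₀ hK, hsin, hcos]
  field_simp
  linear_combination ((A : ℝ) - B) * Real.sin_sq_add_cos_sq (θ / 2)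

/-- The equation to which `-Δ_G (e^{i(mφ+nψ)} f(θ)) = j(j+1) e^{i(mφ+nψ)} f(θ)` reduces, with `f'`
and `f''` the derivatives of `f` near `θ` and of `f'` at `θ`. -/
def WignerODEAt (j m n : ℝ) (f : ℝ → ℝ) (θ : ℝ) : Prop :=
  ∃ f' : ℝ → ℝ, ∃ f'' : ℝ, (∀ᶠ t in 𝓝 θ, HasDerivAt f (f' t) t) ∧ HasDerivAt f' f'' θ ∧
    f'' + Real.cos θ / Real.sin θ * f' θ
        - (m ^ 2 - 2 * m * n * Real.cos θ + n ^ 2) / Real.sin θ ^ 2 * f θ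
      = -(j * (j + 1)) * f θ

theorem WignerODEAt.congr_const_mul {j m n θ c : ℝ} {f g : ℝ → ℝ} (hf : WignerODEAt j m n f θ)
    (hg : g =ᶠ[𝓝 θ] fun t => c * f t) : WignerODEAt j m n g θ := by
  obtain ⟨f', f'', hf', hf'', hode⟩ := hf
  refine ⟨fun t => c * f' t, c * f'', ?_, hf''.const_mul c, ?_⟩
  · filter_upwards [hf', hg.eventuallyEq_nhds] with t ht hgt
    exact (ht.const_mul c).congr_of_eventuallyEq hgt
  · rw [hg.self_of_nhds]
    linear_combination c * hode

theorem wignerODEAt_halfAngle {m n : ℤ} {j : ℝ} {u : ℝ[X]}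
    (hu : (1 - X ^ 2) * derivative (derivative u)
      = (C (2 * (n : ℝ)) + C (2 - 2 * (m : ℝ)) * X) * derivative u
        - C ((j - m + 1) * (j + m)) * u) {θ : ℝ} (hθ : θ ∈ Set.Ioo 0 Real.pi) :
    WignerODEAt j m n (fun t =>
      Real.sin (t / 2) ^ (n - m) * Real.cos (t / 2) ^ (-(m + n)) * u.eval (Real.cos t)) θ := by
  have hSK : ∀ t ∈ Set.Ioo 0 Real.pi, Real.sin (t / 2) ≠ 0 ∧ Real.cos (t / 2) ≠ 0 :=
    fun t ⟨h0, hπ⟩ => ⟨(Real.sin_pos_of_pos_of_lt_pi (by linarith) (by linarith)).ne',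
      (Real.cos_pos_of_mem_Ioo ⟨by linarith, by linarith⟩).ne'⟩
  have hρ := fun t ht => hasDerivAt_sin_half_zpow_mul_cos_half_zpow (n - m) (-(m + n))
    (hSK t ht).1 (hSK t ht).2
  have hw : ∀ (p : ℝ[X]) (t : ℝ), HasDerivAt (fun t => p.eval (Real.cos t))
      (p.derivative.eval (Real.cos t) * -Real.sin t) t :=
    fun p t => (p.hasDerivAt _).comp t (Real.hasDerivAt_cos t)
  have hs : Real.sin θ ≠ 0 := (Real.sin_pos_of_pos_of_lt_pi hθ.1 hθ.2).ne'
  have hr := ((((Real.hasDerivAt_cos θ).const_add 1).const_mul ((n - m : ℤ) : ℝ)).sub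
    (((Real.hasDerivAt_cos θ).const_sub 1).const_mul ((-(m + n) : ℤ) : ℝ))).div
    ((Real.hasDerivAt_sin θ).const_mul 2) (mul_ne_zero two_ne_zero hs)
  refine ⟨_, _, ?_, (((hρ θ hθ).mul hr).mul (hw u θ)).add
    ((hρ θ hθ).mul ((hw u.derivative θ).mul (Real.hasDerivAt_sin θ).neg)), ?_⟩
  · filter_upwards [Ioo_mem_nhds hθ.1 hθ.2] with t ht
    exact (hρ t ht).mul (hw u t)
  · have hz := congrArg (Polynomial.eval (Real.cos θ)) hu
    simp only [eval_mul, eval_sub, eval_add, eval_pow, eval_one, eval_X, eval_C] at hz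
    simp only [Pi.mul_apply, Pi.add_apply, Pi.sub_apply, Pi.div_apply, Pi.neg_apply]
    push_cast
    have hsc := Real.sin_sq_add_cos_sq θ
    generalize Real.sin (θ / 2) ^ (n - m) * Real.cos (θ / 2) ^ (-(m + n)) = ρ
    generalize Real.sin θ = S at *
    generalize Real.cos θ = C at *
    field_simp
    -- Up to `sin² θ + cos² θ = 1`, the equation is `4 ρ sin² θ` times the one for `u` at `cos θ`.
    linear_combination (4 * ρ * S ^ 2) * hz
      + (4 * ρ * (S ^ 2 * eval C (derivative (derivative u)) + m ^ 2 * eval C u)) * hsc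

theorem wignerd_eq_halfAngle (j : ℕ) {m n : ℤ} (hm : |m| ≤ (j : ℤ)) (hn : |n| ≤ (j : ℤ)) :
    ∃ c : ℝ, ∀ θ ∈ Set.Ioo 0 Real.pi, wignerd j m n θ = c *
      (Real.sin (θ / 2) ^ (n - m) * Real.cos (θ / 2) ^ (-(m + n)) * (derivative^[((j : ℤ) - m).toNat]
        ((1 - X) ^ ((j : ℤ) - n).toNat * (1 + X) ^ ((j : ℤ) + n).toNat : ℝ[X])).eval (Real.cos θ)) := by
  obtain ⟨hm₁, hm₂⟩ := abs_le.mp hm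
  obtain ⟨hn₁, hn₂⟩ := abs_le.mp hn
  set k := ((j : ℤ) - m).toNat
  have hweight : (fun t : ℝ => (1 - t) ^ ((k : ℤ) + (m - n)) * (1 + t) ^ ((k : ℤ) + (m + n)))
      = fun t => ((1 - X) ^ ((j : ℤ) - n).toNat * (1 + X) ^ ((j : ℤ) + n).toNat : ℝ[X]).eval t := by
    funext t
    rw [show (k : ℤ) + (m - n) = (((j : ℤ) - n).toNat : ℤ) by omega,
      show (k : ℤ) + (m + n) = (((j : ℤ) + n).toNat : ℤ) by omega, zpow_natCast, zpow_natCast]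
    simp
  refine ⟨(-1) ^ (m - n) * Real.sqrt ((Nat.factorial ((j : ℤ) + m).toNat * Nat.factorial k : ℝ)
      / (Nat.factorial ((j : ℤ) + n).toNat * Nat.factorial ((j : ℤ) - n).toNat : ℝ))
      * ((-1) ^ k / (2 ^ k * (Nat.factorial k : ℝ))) * 2 ^ (n - m) * 2 ^ (-(m + n)),
    fun θ ⟨h0, hπ⟩ => ?_⟩
  have hS : Real.sin (θ / 2) ≠ 0 := (Real.sin_pos_of_pos_of_lt_pi (by linarith) (by linarith)).ne'
  have hK : Real.cos (θ / 2) ≠ 0 := (Real.cos_pos_of_mem_Ioo ⟨by linarith, by linarith⟩).ne'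
  have h1 : 1 - Real.cos θ = 2 * Real.sin (θ / 2) ^ 2 := by
    rw [Real.sin_sq, Real.cos_sq, show 2 * (θ / 2) = θ by ring]; ring
  have h2 : 1 + Real.cos θ = 2 * Real.cos (θ / 2) ^ 2 := by
    rw [Real.cos_sq, show 2 * (θ / 2) = θ by ring]; ring
  have hSpow : Real.sin (θ / 2) ^ (m - n) * (Real.sin (θ / 2) ^ 2) ^ (-(m - n))
      = Real.sin (θ / 2) ^ (n - m) := by
    rw [← zpow_natCast, ← zpow_mul, ← zpow_add₀ hS]; congr 1; push_cast; ring
  have hKpow : Real.cos (θ / 2) ^ (m + n) * (Real.cos (θ / 2) ^ 2) ^ (-(m + n))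
      = Real.cos (θ / 2) ^ (-(m + n)) := by
    rw [← zpow_natCast, ← zpow_mul, ← zpow_add₀ hK]; congr 1; push_cast; ring
  unfold wignerd jacobiP
  rw [hweight, iteratedDeriv_polynomial_eval, h1, h2, mul_zpow, mul_zpow, ← hSpow, ← hKpow,
    show 2 ^ (-(m - n)) = (2 : ℝ) ^ (n - m) by congr 1; ring]
  ring

theorem wignerODEAt_wignerd (j : ℕ) {m n : ℤ} (hm : |m| ≤ (j : ℤ)) (hn : |n| ≤ (j : ℤ)) {θ : ℝ}
    (hθ : θ ∈ Set.Ioo 0 Real.pi) : WignerODEAt j m n (wignerd j m n) θ := by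
  obtain ⟨c, hc⟩ := wignerd_eq_halfAngle j hm hn
  refine (wignerODEAt_halfAngle ?_ hθ).congr_const_mul
    (Filter.eventually_of_mem (Ioo_mem_nhds hθ.1 hθ.2) hc)
  obtain ⟨hm₁, hm₂⟩ := abs_le.mp hm
  obtain ⟨hn₁, hn₂⟩ := abs_le.mp hn
  have h := one_sub_X_sq_mul_iterate_derivative
    (one_sub_X_sq_mul_derivative_one_sub_X_pow_mul_one_add_X_pow (R := ℝ)
      ((j : ℤ) - n).toNat ((j : ℤ) + n).toNat) ((j : ℤ) - m).toNat
  have hk : ((((j : ℤ) - m).toNat : ℕ) : ℝ) = j - m := by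
    exact_mod_cast Int.toNat_of_nonneg (by omega)
  have ha : ((((j : ℤ) - n).toNat : ℕ) : ℝ) = j - n := by
    exact_mod_cast Int.toNat_of_nonneg (by omega)
  have hb : ((((j : ℤ) + n).toNat : ℕ) : ℝ) = j + n := by
    exact_mod_cast Int.toNat_of_nonneg (by omega)
  rw [hk, ha, hb, Function.iterate_succ_apply', Function.iterate_succ_apply'] at h
  rw [h]
  ring_nf

/-- The Wigner D-function `D^j_{mn}` is an eigenfunction of the Casimir operator
`ξ₁² + ξ₂² + ξ₃²` built from the left-invariant fields on `SO(3)` in Euler angles,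
with eigenvalue `−j(j+1)`, at every point with `θ ∈ (0, π)`. -/
theorem wignerD_casimir_eigenfunction (j : ℕ) (m n : ℤ)
    (hm : |m| ≤ (j : ℤ)) (hn : |n| ≤ (j : ℤ))
    (p : ℝ × ℝ × ℝ) (hθ : p.2.1 ∈ Set.Ioo 0 Real.pi) :
    xi1 (xi1 (wignerDfun j m n)) p + xi2 (xi2 (wignerDfun j m n)) p
        + xi3 (xi3 (wignerDfun j m n)) p
      = -(j : ℂ) * ((j : ℂ) + 1) * wignerDfun j m n p := by
  obtain ⟨d', d'', hd', hd'', hode⟩ := wignerODEAt_wignerd j hm hn hθ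
  have hs : Real.sin p.2.1 ≠ 0 := (Real.sin_pos_of_pos_of_lt_pi hθ.1 hθ.2).ne'
  rw [show wignerDfun j m n = eulerMode m n (fun t => (wignerd j m n t : ℂ)) from rfl,
    casimir_eulerMode (hd'.mono fun t ht => ht.ofReal_comp) hd''.ofReal_comp hs]
  have hodeC := congrArg (fun x : ℝ => (x : ℂ)) hode
  simp only [eulerMode]
  push_cast at hodeC ⊢
  linear_combination Complex.exp (Complex.I * (m * p.1 + n * p.2.2)) * hodeC
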